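/- Let A = (A(j,k))_{j,k∈ℤ} be a bi-infinite matrix which, as an operator on ℓ²(ℤ), is bounded, self-adjoint, positive, and invertible. Assume there exist positive constants κ and γ such that |A(j,k)| ≤ κ e^{-γ|j−k|} for every pair of integers j and k. Then there exist positive constants κ̃ and γ̃ such that the matrix entries of the inverse operator satisfy |A^{-1}(s,t)| ≤ κ̃ e^{-γ̃|s−t|} for all s,t ∈ ℤ. -/

import Mathlib

noncomputable section
open MeasureTheory Filter Complex

/-- The Hilbert space `ℓ²(ℤ)` of square-summable complex sequences. -/
abbrev l2Z : Type := lp (fun _ : ℤ => ℂ) 2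

/-- The matrix entry `T(j,k) = ⟨T δ_k, δ_j⟩` of a bounded operator on `ℓ²(ℤ)`, i.e. the
`j`-th coordinate of the image of the `k`-th standard basis vector. -/
def matEntry (T : l2Z →L[ℂ] l2Z) (j k : ℤ) : ℂ := T (lp.single 2 k 1) j

/-- `T` is a positive operator on `ℓ²(ℤ)`: `⟨x, Tx⟩ ≥ 0` for every `x`. -/
def IsPosOp (T : l2Z →L[ℂ] l2Z) : Prop :=
  ∀ v : l2Z, (inner (𝕜 := ℂ) (T v) v).im = 0 ∧ 0 ≤ (inner (𝕜 := ℂ) (T v) v).re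

/-- `Tinv` is a (two-sided) inverse of the bounded operator `T` on `ℓ²(ℤ)`,
i.e. `T` is boundedly invertible with inverse `Tinv`. -/
def IsInvOf (Tinv T : l2Z →L[ℂ] l2Z) : Prop :=
  Tinv.comp T = ContinuousLinearMap.id ℂ l2Z ∧ T.comp Tinv = ContinuousLinearMap.id ℂ l2Z

/-- `T` acts on `ℓ²(ℤ)` as the bi-infinite Gaussian matrix
`A(j,k) = e^{-λ(x_j-x_k)²}`. -/
def IsGaussMatrix (lam : ℝ) (x : ℤ → ℝ) (T : l2Z →L[ℂ] l2Z) : Prop :=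
  ∀ (v : l2Z) (k : ℤ), T v k = ∑' j : ℤ, (Real.exp (-(lam * (x k - x j) ^ 2)) : ℂ) * v j

/-- The Gaussian `g_λ(t) = e^{-λ t²}`, as a complex number. -/
def gauss (lam t : ℝ) : ℂ := Real.exp (-(lam * t ^ 2))

/-- The `l`-th fundamental function `L_l(t) = ∑_k A⁻¹(k,l) e^{-λ(t-x_k)²}`. -/
def fundFn (lam : ℝ) (x : ℤ → ℝ) (Tinv : l2Z →L[ℂ] l2Z) (l : ℤ) (t : ℝ) : ℂ :=
  ∑' k : ℤ, matEntry Tinv k l * gauss lam (t - x k)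

/-!
Combes–Thomas argument. For a bounded `1`-Lipschitz weight `m : ℤ → ℝ` and `θ ≥ 0`, conjugating
`A` by the multiplication operator `e^{θ m}` multiplies its `(j, k)` entry by `e^{θ (m j - m k)}`,
which differs from `1` by at most `θ |j - k| e^{θ |j - k|}`. Summing the exponentially decaying
diagonals of the difference gives `‖e^{θ m} A e^{-θ m} - A‖ = O(θ)` uniformly in `m`, so for small
`θ` a Neumann-type estimate bounds the inverse `e^{θ m} A⁻¹ e^{-θ m}` by `2 ‖A⁻¹‖`. Its `(s, t)`
entry is `e^{θ (m s - m t)} A⁻¹(s, t)`, and the weight `m = min (|· - t|, |s - t|)` turns this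
into `e^{θ |s - t|} |A⁻¹(s, t)| ≤ 2 ‖A⁻¹‖`.
-/

open scoped lp ENNReal

lemma hasSum_matEntry_mul (T : l2Z →L[ℂ] l2Z) (v : l2Z) (j : ℤ) :
    HasSum (fun k => matEntry T j k * v k) (T v j) := by
  have hv : HasSum (fun k => v k • lp.single 2 k (1 : ℂ)) v := by
    simpa [← lp.single_smul] using lp.hasSum_single (by norm_num) v
  simpa [lp.evalCLM, matEntry, mul_comm] using
    (hv.mapL T).mapL (lp.evalCLM ℂ (fun _ : ℤ => ℂ) 2 j)

lemma norm_matEntry_le_opNorm (T : l2Z →L[ℂ] l2Z) (j k : ℤ) : ‖matEntry T j k‖ ≤ ‖T‖ :=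
  calc ‖matEntry T j k‖
    _ ≤ ‖T (lp.single 2 k 1)‖ := lp.norm_apply_le_norm two_ne_zero _ _
    _ ≤ ‖T‖ * ‖(lp.single 2 k 1 : l2Z)‖ := T.le_opNorm _
    _ = ‖T‖ := by rw [lp.norm_single (by norm_num), norm_one, mul_one]

lemma matEntry_sub (S T : l2Z →L[ℂ] l2Z) (j k : ℤ) :
    matEntry (S - T) j k = matEntry S j k - matEntry T j k := rfl

section Diagonal

variable {α : Type*}

lemma norm_mul_apply_le (w : ℓ^∞(α, ℂ)) (v : ℓ²(α, ℂ)) (i : α) :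
    ‖w i * v i‖ ≤ ‖(‖w‖ • v) i‖ := by
  rw [norm_mul, lp.coeFn_smul, Pi.smul_apply, norm_smul, norm_norm]
  exact mul_le_mul_of_nonneg_right (lp.norm_apply_le_norm ENNReal.top_ne_zero w i)
    (norm_nonneg _)

def diagOp (w : ℓ^∞(α, ℂ)) : ℓ²(α, ℂ) →L[ℂ] ℓ²(α, ℂ) :=
  LinearMap.mkContinuous
    { toFun := fun v => ⟨⇑w * ⇑v, (lp.memℓp (‖w‖ • v)).mono' (norm_mul_apply_le w v)⟩
      map_add' := fun v u => lp.ext (mul_add (⇑w) v u)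
      map_smul' := fun c v => lp.ext (mul_smul_comm c (⇑w) v) }
    ‖w‖ fun v => calc
      _ ≤ ‖‖w‖ • v‖ := lp.norm_mono two_ne_zero (norm_mul_apply_le w v)
      _ = ‖w‖ * ‖v‖ := by rw [lp.norm_const_smul two_ne_zero, norm_norm]

@[simp] lemma diagOp_apply (w : ℓ^∞(α, ℂ)) (v : ℓ²(α, ℂ)) (i : α) :
    diagOp w v i = w i * v i := rfl

lemma norm_diagOp_le (w : ℓ^∞(α, ℂ)) : ‖diagOp w‖ ≤ ‖w‖ :=
  LinearMap.mkContinuous_norm_le _ (norm_nonneg w) _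

lemma diagOp_mul (w w' : ℓ^∞(α, ℂ)) : diagOp (w * w') = diagOp w * diagOp w' := by
  ext v i
  simp [lp.infty_coeFn_mul, mul_assoc]

lemma diagOp_one : diagOp (1 : ℓ^∞(α, ℂ)) = 1 := by
  ext v i
  simp [lp.infty_coeFn_one]

end Diagonal

lemma matEntry_diagOp_mul_mul (a b : ℓ^∞(ℤ, ℂ)) (T : l2Z →L[ℂ] l2Z) (j k : ℤ) :
    matEntry (diagOp a * T * diagOp b) j k = a j * matEntry T j k * b k := by
  have hδ : diagOp b (lp.single 2 k 1) = b k • lp.single 2 k (1 : ℂ) := by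
    ext i
    by_cases hik : i = k
    · subst hik; simp
    · simp [lp.single_apply, hik]
  simp [matEntry, hδ, mul_comm, mul_left_comm]

section Shift

lemma summable_norm_rpow_comp_sub (v : l2Z) (n : ℤ) :
    Summable fun j => ‖v (j - n)‖ ^ (2 : ℝ≥0∞).toReal :=
  (Equiv.subRight n).summable_iff.2 ((lp.memℓp v).summable (by norm_num))

def shiftOp (n : ℤ) : l2Z →L[ℂ] l2Z :=
  LinearMap.mkContinuous
    { toFun := fun v => ⟨fun j => v (j - n), memℓp_gen (summable_norm_rpow_comp_sub v n)⟩
      map_add' := fun _ _ => rfl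
      map_smul' := fun _ _ => rfl }
    1 fun v => by
      rw [one_mul]
      refine lp.norm_le_of_tsum_le (by norm_num) (norm_nonneg v) (le_of_eq ?_)
      exact ((Equiv.subRight n).tsum_eq fun j => ‖v j‖ ^ (2 : ℝ≥0∞).toReal).trans
        (lp.norm_rpow_eq_tsum (by norm_num) v).symm

@[simp] lemma shiftOp_apply (n : ℤ) (v : l2Z) (j : ℤ) : shiftOp n v j = v (j - n) := rfl

lemma norm_shiftOp_le (n : ℤ) : ‖shiftOp n‖ ≤ 1 :=
  LinearMap.mkContinuous_norm_le _ zero_le_one _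

end Shift

lemma opNorm_le_tsum_of_norm_matEntry_le (T : l2Z →L[ℂ] l2Z) {h : ℤ → ℝ} (hh : Summable h)
    (hT : ∀ j k, ‖matEntry T j k‖ ≤ h (j - k)) : ‖T‖ ≤ ∑' n, h n := by
  -- `T` is the sum of its diagonals `B n`, and `‖B n‖ ≤ h n`
  have hdiag (n : ℤ) : Memℓp (fun j => matEntry T j (j - n)) ∞ :=
    memℓp_infty ⟨h n, by rintro _ ⟨j, rfl⟩; simpa using hT j (j - n)⟩
  let B (n : ℤ) : l2Z →L[ℂ] l2Z := diagOp ⟨_, hdiag n⟩ * shiftOp n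
  have hB (n : ℤ) : ‖B n‖ ≤ h n := calc
    ‖B n‖ ≤ ‖(⟨_, hdiag n⟩ : ℓ^∞(ℤ, ℂ))‖ * 1 :=
      (norm_mul_le _ _).trans (mul_le_mul (norm_diagOp_le _) (norm_shiftOp_le n)
        (norm_nonneg _) (norm_nonneg _))
    _ ≤ h n := by
      rw [mul_one]
      exact lp.norm_le_of_forall_le ((norm_nonneg _).trans (by simpa using hT n 0))
        fun j => by simpa using hT j (j - n)
  have hsum : HasSum B T := by
    have hB' : HasSum B (∑' n, B n) := (Summable.of_norm_bounded hh hB).hasSum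
    suffices T = ∑' n, B n by rwa [this]
    ext v j
    have hcoord : HasSum (fun n => B n v j) ((∑' n, B n) v j) :=
      (hB'.mapL (ContinuousLinearMap.apply ℂ l2Z v)).mapL
        (lp.evalCLM ℂ (fun _ : ℤ => ℂ) 2 j)
    exact ((Equiv.subLeft j).hasSum_iff.2 (hasSum_matEntry_mul T v j)).unique hcoord
  calc ‖T‖ = ‖∑' n, B n‖ := by rw [hsum.tsum_eq]
    _ ≤ ∑' n, h n := tsum_of_norm_bounded hh.hasSum hB

lemma norm_le_two_mul_of_norm_mul_norm_sub_le {R : Type*} [NormedRing R] {a b g x : R}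
    (hba : b * a = 1) (hgx : g * x = 1) (hsmall : ‖b‖ * ‖g - a‖ ≤ 1 / 2) : ‖x‖ ≤ 2 * ‖b‖ := by
  have hx : x = b - b * (g - a) * x := by
    rw [mul_assoc, sub_mul, hgx, mul_sub, ← mul_assoc b a, hba, one_mul, mul_one,
      sub_sub_cancel]
  have : ‖x‖ ≤ ‖b‖ + ‖b‖ * ‖g - a‖ * ‖x‖ := calc
    ‖x‖ = ‖b - b * (g - a) * x‖ := by rw [← hx]
    _ ≤ ‖b‖ + ‖b‖ * ‖g - a‖ * ‖x‖ :=
      (norm_sub_le _ _).trans (add_le_add_right ((norm_mul_le _ _).trans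
        (mul_le_mul_of_nonneg_right (norm_mul_le _ _) (norm_nonneg _))) _)
  nlinarith [mul_le_mul_of_nonneg_right hsmall (norm_nonneg x)]

lemma Real.abs_exp_sub_one_le_abs_mul_exp_abs (x : ℝ) :
    |Real.exp x - 1| ≤ |x| * Real.exp |x| := by
  rcases le_total 0 x with hx | hx
  · have : (1 - x) * Real.exp x ≤ 1 := by
      simpa [← Real.exp_add, neg_add_eq_sub] using
        mul_le_mul_of_nonneg_right (Real.add_one_le_exp (-x)) (Real.exp_pos x).le
    rw [abs_of_nonneg hx, abs_of_nonneg (by linarith [Real.add_one_le_exp x])]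
    linarith
  · rw [abs_of_nonpos hx, abs_of_nonpos (by linarith [Real.exp_le_one_iff.2 hx])]
    nlinarith [Real.add_one_le_exp x, Real.one_le_exp (neg_nonneg.2 hx)]

lemma summable_abs_mul_exp_neg_mul_abs {b : ℝ} (hb : 0 < b) :
    Summable fun n : ℤ => |(n : ℝ)| * Real.exp (-b * |(n : ℝ)|) := by
  have hnat : Summable fun n : ℕ => (n : ℝ) * Real.exp (-b * n) := by
    simpa [neg_mul] using Real.summable_pow_mul_exp_neg_nat_mul 1 hb
  refine Summable.of_nat_of_neg ?_ ?_ <;> simpa using hnat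

section Weights

variable {α : Type*}

def expWeight (θ : ℝ) (m : ℓ^∞(α, ℝ)) : ℓ^∞(α, ℂ) :=
  ⟨fun i => (Real.exp (θ * m i) : ℂ), memℓp_infty ⟨Real.exp (|θ| * ‖m‖), by
    rintro _ ⟨i, rfl⟩
    dsimp only
    rw [Complex.norm_real, Real.norm_of_nonneg (Real.exp_pos _).le, Real.exp_le_exp]
    calc θ * m i ≤ |θ| * |m i| := (le_abs_self _).trans (abs_mul _ _).le
      _ ≤ |θ| * ‖m‖ := mul_le_mul_of_nonneg_left
        (lp.norm_apply_le_norm ENNReal.top_ne_zero m i) (abs_nonneg θ)⟩⟩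

@[simp] lemma expWeight_apply (θ : ℝ) (m : ℓ^∞(α, ℝ)) (i : α) :
    expWeight θ m i = Real.exp (θ * m i) := rfl

lemma expWeight_mul_expWeight_neg (θ : ℝ) (m : ℓ^∞(α, ℝ)) :
    expWeight θ m * expWeight (-θ) m = 1 := by
  ext i
  simp [lp.infty_coeFn_mul, lp.infty_coeFn_one, ← Complex.exp_add]

def truncDist [PseudoMetricSpace α] (t : α) (r : ℝ) : ℓ^∞(α, ℝ) :=
  ⟨fun j => min (dist j t) r, memℓp_infty ⟨|r|, by
    rintro _ ⟨j, rfl⟩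
    exact abs_le.2 ⟨le_min ((neg_nonpos.2 (abs_nonneg r)).trans dist_nonneg) (neg_abs_le r),
      (min_le_right _ _).trans (le_abs_self r)⟩⟩⟩

lemma lipschitzWith_truncDist [PseudoMetricSpace α] (t : α) (r : ℝ) :
    LipschitzWith 1 ⇑(truncDist t r) :=
  (LipschitzWith.dist_left t).min_const r

end Weights

def expMoment (b : ℝ) : ℝ := ∑' n : ℤ, |(n : ℝ)| * Real.exp (-b * |(n : ℝ)|)

def HasExpDecay (T : l2Z →L[ℂ] l2Z) (κ γ : ℝ) : Prop :=
  ∀ j k : ℤ, ‖matEntry T j k‖ ≤ κ * Real.exp (-γ * |(j : ℝ) - (k : ℝ)|)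

section CombesThomas

variable {A Ainv : l2Z →L[ℂ] l2Z} {κ γ θ : ℝ}

lemma norm_matEntry_conj_expWeight_sub_le (hA : HasExpDecay A κ γ) (hκ : 0 ≤ κ)
    {m : ℓ^∞(ℤ, ℝ)} (hm : LipschitzWith 1 ⇑m) (hθ : 0 ≤ θ) (hθγ : θ ≤ γ / 2) (j k : ℤ) :
    ‖matEntry (diagOp (expWeight θ m) * A * diagOp (expWeight (-θ) m) - A) j k‖ ≤
      θ * κ * (|((j - k : ℤ) : ℝ)| * Real.exp (-(γ / 2) * |((j - k : ℤ) : ℝ)|)) := by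
  set d := |((j - k : ℤ) : ℝ)| with hd_def
  have hd : |(j : ℝ) - (k : ℝ)| = d := by rw [hd_def, Int.cast_sub]
  have hdiff : |θ * m j - θ * m k| ≤ θ * d := by
    rw [← mul_sub, abs_mul, abs_of_nonneg hθ, ← hd]
    exact mul_le_mul_of_nonneg_left
      (by simpa [Real.dist_eq, Int.dist_eq] using hm.dist_le_mul j k) hθ
  have hexp : ‖(Real.exp (θ * m j - θ * m k) : ℂ) - 1‖ ≤ θ * d * Real.exp (θ * d) := by
    rw [← Complex.ofReal_one, ← Complex.ofReal_sub, Complex.norm_real, Real.norm_eq_abs]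
    exact (Real.abs_exp_sub_one_le_abs_mul_exp_abs _).trans
      (mul_le_mul hdiff (Real.exp_le_exp.2 hdiff) (Real.exp_pos _).le (by positivity))
  have hentry : matEntry (diagOp (expWeight θ m) * A * diagOp (expWeight (-θ) m) - A) j k =
      ((Real.exp (θ * m j - θ * m k) : ℂ) - 1) * matEntry A j k := by
    rw [matEntry_sub, matEntry_diagOp_mul_mul, expWeight_apply, expWeight_apply,
      sub_eq_add_neg (θ * m j), Real.exp_add, ← neg_mul]
    push_cast
    ring
  rw [hentry, norm_mul]
  calc _ ≤ θ * d * Real.exp (θ * d) * (κ * Real.exp (-γ * d)) :=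
        mul_le_mul hexp (hd ▸ hA j k) (norm_nonneg _) (by positivity)
    _ = θ * κ * (d * Real.exp (θ * d + -γ * d)) := by rw [Real.exp_add]; ring
    _ ≤ θ * κ * (d * Real.exp (-(γ / 2) * d)) := by
        gcongr
        nlinarith [abs_nonneg ((j - k : ℤ) : ℝ)]

lemma norm_conj_expWeight_sub_le (hA : HasExpDecay A κ γ) (hκ : 0 ≤ κ) (hγ : 0 < γ)
    {m : ℓ^∞(ℤ, ℝ)} (hm : LipschitzWith 1 ⇑m) (hθ : 0 ≤ θ) (hθγ : θ ≤ γ / 2) :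
    ‖diagOp (expWeight θ m) * A * diagOp (expWeight (-θ) m) - A‖ ≤
      θ * κ * expMoment (γ / 2) := by
  rw [expMoment, ← tsum_mul_left]
  exact opNorm_le_tsum_of_norm_matEntry_le _
    ((summable_abs_mul_exp_neg_mul_abs (half_pos hγ)).mul_left _)
    (norm_matEntry_conj_expWeight_sub_le hA hκ hm hθ hθγ)

lemma norm_conj_expWeight_inv_le (hinv : IsInvOf Ainv A) (hA : HasExpDecay A κ γ)
    (hκ : 0 ≤ κ) (hγ : 0 < γ) {m : ℓ^∞(ℤ, ℝ)} (hm : LipschitzWith 1 ⇑m) (hθ : 0 ≤ θ)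
    (hθγ : θ ≤ γ / 2) (hsmall : ‖Ainv‖ * (θ * κ * expMoment (γ / 2)) ≤ 1 / 2) :
    ‖diagOp (expWeight θ m) * Ainv * diagOp (expWeight (-θ) m)‖ ≤ 2 * ‖Ainv‖ := by
  have hpm : diagOp (expWeight θ m) * diagOp (expWeight (-θ) m) = 1 := by
    rw [← diagOp_mul, expWeight_mul_expWeight_neg, diagOp_one]
  have hmp : diagOp (expWeight (-θ) m) * diagOp (expWeight θ m) = 1 := by
    rw [← diagOp_mul, mul_comm, expWeight_mul_expWeight_neg, diagOp_one]
  refine norm_le_two_mul_of_norm_mul_norm_sub_le hinv.1 ?_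
    ((mul_le_mul_of_nonneg_left (norm_conj_expWeight_sub_le hA hκ hγ hm hθ hθγ)
      (norm_nonneg _)).trans hsmall)
  calc _ = diagOp (expWeight θ m) * (A * (diagOp (expWeight (-θ) m) * diagOp (expWeight θ m)
        * (Ainv * diagOp (expWeight (-θ) m)))) := by simp only [mul_assoc]
    _ = 1 := by
      rw [hmp, one_mul, ← mul_assoc A, show A * Ainv = 1 from hinv.2, one_mul, hpm]

lemma exp_mul_norm_matEntry_le (hinv : IsInvOf Ainv A) (hA : HasExpDecay A κ γ)
    (hκ : 0 ≤ κ) (hγ : 0 < γ) (hθ : 0 ≤ θ) (hθγ : θ ≤ γ / 2)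
    (hsmall : ‖Ainv‖ * (θ * κ * expMoment (γ / 2)) ≤ 1 / 2) (s t : ℤ) :
    Real.exp (θ * |(s : ℝ) - (t : ℝ)|) * ‖matEntry Ainv s t‖ ≤ 2 * ‖Ainv‖ := by
  set m := truncDist t (dist s t)
  have hms : m s = |(s : ℝ) - (t : ℝ)| := min_self _
  have hmt : m t = 0 := by simp [m, truncDist]
  have hX := (norm_matEntry_le_opNorm _ s t).trans (norm_conj_expWeight_inv_le hinv hA hκ hγ
    (lipschitzWith_truncDist t (dist s t)) hθ hθγ hsmall)
  rwa [matEntry_diagOp_mul_mul, expWeight_apply, expWeight_apply, hms, hmt, mul_zero,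
    Real.exp_zero, Complex.ofReal_one, mul_one, norm_mul, Complex.norm_real,
    Real.norm_of_nonneg (Real.exp_pos _).le] at hX

end CombesThomas

open MeasureTheory Filter Complex in
theorem statement16_general (A Ainv : l2Z →L[ℂ] l2Z)
    (hinv : IsInvOf Ainv A) (κ γ : ℝ) (hκ : 0 < κ) (hγ : 0 < γ)
    (hA : ∀ j k : ℤ, ‖matEntry A j k‖ ≤ κ * Real.exp (-γ * |(j : ℝ) - (k : ℝ)|)) :
    ∃ κ' γ' : ℝ, 0 < κ' ∧ 0 < γ' ∧
      ∀ s t : ℤ, ‖matEntry Ainv s t‖ ≤ κ' * Real.exp (-γ' * |(s : ℝ) - (t : ℝ)|) := by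
  set C := ‖Ainv‖ * κ * expMoment (γ / 2)
  have hC : 0 ≤ C := mul_nonneg (by positivity) (tsum_nonneg fun n => by positivity)
  set θ := min (γ / 2) (1 / (2 * (C + 1)))
  have hθ : 0 < θ := lt_min (half_pos hγ) (by positivity)
  have hsmall : ‖Ainv‖ * (θ * κ * expMoment (γ / 2)) ≤ 1 / 2 := calc
    _ = θ * C := by ring
    _ ≤ 1 / (2 * (C + 1)) * C := mul_le_mul_of_nonneg_right (min_le_right _ _) hC
    _ ≤ 1 / 2 := by rw [div_mul_eq_mul_div, div_le_iff₀ (by positivity)]; linarith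
  refine ⟨2 * ‖Ainv‖ + 1, θ, by positivity, hθ, fun s t => ?_⟩
  have hst := exp_mul_norm_matEntry_le hinv hA hκ.le hγ hθ.le (min_le_left _ _) hsmall s t
  rw [neg_mul, Real.exp_neg, ← div_eq_mul_inv, le_div_iff₀ (Real.exp_pos _), mul_comm]
  linarith

open MeasureTheory Filter Complex in
/-- If a bi-infinite matrix `A`, as a bounded operator on `ℓ²(ℤ)`, is self-adjoint,
positive, and invertible (with bounded inverse `Ainv`), and its entries satisfy
`|A(j,k)| ≤ κ e^{-γ|j-k|}`, then the entries of the inverse satisfy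
`|A⁻¹(s,t)| ≤ κ̃ e^{-γ̃|s-t|}` for some positive constants `κ̃, γ̃`. -/
theorem statement16 (A Ainv : l2Z →L[ℂ] l2Z) (hsa : IsSelfAdjoint A) (hpos : IsPosOp A)
    (hinv : IsInvOf Ainv A) (κ γ : ℝ) (hκ : 0 < κ) (hγ : 0 < γ)
    (hA : ∀ j k : ℤ, ‖matEntry A j k‖ ≤ κ * Real.exp (-γ * |(j : ℝ) - (k : ℝ)|)) :
    ∃ κ' γ' : ℝ, 0 < κ' ∧ 0 < γ' ∧
      ∀ s t : ℤ, ‖matEntry Ainv s t‖ ≤ κ' * Real.exp (-γ' * |(s : ℝ) - (t : ℝ)|) :=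
  statement16_general A Ainv hinv κ γ hκ hγ hA
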